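/- Let G be a connected finite simple graph with n ≥ 2 vertices and m edges, and let κ = η(G) be its nullity. Then E(G) = sqrt( 2m + (n−κ)(n−κ−1)·|Υ_{n−κ}(G)|^{2/(n−κ)} ) holds if and only if G is isomorphic to a complete bipartite graph K_{a,b} for some integers a, b ≥ 1 with a + b = n; in that case κ = n − 2. -/

import Mathlib

open Finset

/-- The adjacency matrix of a simple graph, as a real matrix, is Hermitian. -/
lemma SimpleGraph.adjMatrix_isHermitian {V : Type*} [Fintype V]
    (G : SimpleGraph V) [DecidableRel G.Adj] : (G.adjMatrix ℝ).IsHermitian := by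
  unfold Matrix.IsHermitian
  ext i j
  simp [Matrix.conjTranspose_apply, SimpleGraph.adj_comm]

/-- The energy of a graph: the sum of the absolute values of the eigenvalues of
its adjacency matrix. -/
noncomputable def SimpleGraph.energy {n : ℕ} (G : SimpleGraph (Fin n))
    [DecidableRel G.Adj] : ℝ :=
  ∑ i, |(G.adjMatrix_isHermitian).eigenvalues i|

/-- The nullity of a graph: the multiplicity of `0` as an eigenvalue of its
adjacency matrix. -/
noncomputable def SimpleGraph.nullity {n : ℕ} (G : SimpleGraph (Fin n))
    [DecidableRel G.Adj] : ℕ :=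
  (Finset.univ.filter fun i => (G.adjMatrix_isHermitian).eigenvalues i = 0).card

/-- `Υ_{n-κ}(G)`: the product of the nonzero eigenvalues of `G`, i.e. the
`(n-κ)`-th elementary symmetric function of the eigenvalues when `κ` is the
nullity of `G`. -/
noncomputable def SimpleGraph.prodNonzeroEig {n : ℕ} (G : SimpleGraph (Fin n))
    [DecidableRel G.Adj] : ℝ :=
  ∏ i ∈ Finset.univ.filter
      (fun i => (G.adjMatrix_isHermitian).eigenvalues i ≠ 0),
    (G.adjMatrix_isHermitian).eigenvalues i

/-!
Write `λᵢ` for the nonzero eigenvalues of `G` and `r` for their number. Since `∑ λᵢ² = tr A² = 2m`,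
`E(G)² = 2m + ∑_{i ≠ j} |λᵢ| |λⱼ|`, and by AM-GM the last sum is at least
`r (r - 1) |∏ λᵢ| ^ (2 / r)`, with equality iff all `|λᵢ|` coincide (for `r ≤ 2` this is forced
by `tr A = 0`). By the spectral theorem this means `A³ = c A` for a scalar `c`. As `(A³)ᵤᵥ`
counts walks of length 3, the endpoints of every such walk are then adjacent; in a connected graph
this makes two vertices adjacent iff walks to them from a fixed vertex have lengths of different
parity, i.e. `G ≅ K_{a,b}`. Conversely, `K_{a,b}` has `A³ = a b A` and `tr A² = 2 a b`, so its
nonzero eigenvalues are `±√(ab)`, exactly two of them.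
-/

open Matrix

namespace Matrix.IsHermitian

variable {𝕜 : Type*} [RCLike 𝕜] {ι : Type*} [Fintype ι] [DecidableEq ι] {A : Matrix ι ι 𝕜}

theorem pow_eq_conj_diagonal (hA : A.IsHermitian) (k : ℕ) :
    A ^ k = Unitary.conjStarAlgAut 𝕜 _ hA.eigenvectorUnitary
      (diagonal fun i => (hA.eigenvalues i : 𝕜) ^ k) := by
  conv_lhs => rw [hA.spectral_theorem]
  rw [← map_pow, diagonal_pow]
  rfl

theorem trace_pow (hA : A.IsHermitian) (k : ℕ) :
    (A ^ k).trace = ∑ i, (hA.eigenvalues i : 𝕜) ^ k := by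
  rw [hA.pow_eq_conj_diagonal, Unitary.conjStarAlgAut_apply, trace_mul_cycle,
    Unitary.coe_star_mul_self, one_mul, trace_diagonal]

theorem pow_three_eq_smul_iff (hA : A.IsHermitian) (c : ℝ) :
    A ^ 3 = (c : 𝕜) • A ↔ ∀ i, hA.eigenvalues i ^ 3 = c * hA.eigenvalues i := by
  have hA₁ := hA.pow_eq_conj_diagonal 1
  rw [pow_one] at hA₁
  rw [hA.pow_eq_conj_diagonal, show (c : 𝕜) • A = _ from congrArg _ hA₁, ← map_smul,
    EquivLike.apply_eq_iff_eq, ← diagonal_smul, diagonal_eq_diagonal_iff]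
  simp only [pow_one, Pi.smul_apply, smul_eq_mul]
  exact forall_congr' fun i => by exact_mod_cast Iff.rfl

end Matrix.IsHermitian

namespace Matrix

theorem submatrix_mul_submatrix_self {V W R : Type*} [Fintype V] [Fintype W]
    [DecidableEq W] [Semiring R] (s : V → W) (M N : Matrix W W R) :
    M.submatrix s s * N.submatrix s s =
      (M * diagonal (fun c => (#{v | s v = c} : R)) * N).submatrix s s := by
  ext u v
  simp only [mul_apply, submatrix_apply, diagonal_apply, mul_ite, mul_zero, sum_ite_eq',
    mem_univ, if_true]
  rw [← sum_fiberwise' univ s fun c => M (s u) c * N c (s v)]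
  refine sum_congr rfl fun c _ => ?_
  rw [sum_const, nsmul_eq_mul, ← mul_assoc, Nat.cast_comm]

theorem trace_submatrix_self {V W R : Type*} [Fintype V] [Fintype W]
    [DecidableEq W] [Semiring R] (s : V → W) (M : Matrix W W R) :
    (M.submatrix s s).trace = ∑ c, (#{v | s v = c} : R) * M c c := by
  simp only [trace, diag_apply, submatrix_apply]
  rw [← sum_fiberwise' univ s fun c => M c c]
  simp only [sum_const, nsmul_eq_mul]

end Matrix

namespace Finset

variable {ι : Type*}

theorem prod_offDiag_mul_mul_sq [DecidableEq ι] {M : Type*} [CommMonoid M] (s : Finset ι)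
    (f : ι → M) :
    (∏ p ∈ s.offDiag, f p.1 * f p.2) * (∏ i ∈ s, f i) ^ 2 = (∏ i ∈ s, f i) ^ (2 * #s) := by
  have hdiag : ∏ p ∈ s.diag, f p.1 * f p.2 = (∏ i ∈ s, f i) ^ 2 := by
    rw [prod_diag, prod_mul_distrib, sq]
  have hsquare : ∏ p ∈ s ×ˢ s, f p.1 * f p.2 = (∏ i ∈ s, f i) ^ (2 * #s) := by
    simp only [prod_product, prod_mul_distrib, prod_const, prod_pow]
    rw [← pow_add, two_mul]
  rw [← hdiag, mul_comm, ← prod_union (disjoint_diag_offDiag s), diag_union_offDiag, hsquare]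

theorem sq_sum_eq_sum_sq_add_sum_offDiag [DecidableEq ι] {R : Type*} [CommSemiring R]
    (s : Finset ι) (f : ι → R) :
    (∑ i ∈ s, f i) ^ 2 = ∑ i ∈ s, f i ^ 2 + ∑ p ∈ s.offDiag, f p.1 * f p.2 := by
  rw [sq, sum_mul_sum, ← sum_product', ← diag_union_offDiag,
    sum_union (disjoint_diag_offDiag s), sum_diag]
  simp only [sq]

theorem sum_offDiag_mul_of_forall_eq {s : Finset ι} {x : ι → ℝ} {θ : ℝ} (hθ : 0 ≤ θ)
    (hx : ∀ i ∈ s, x i = θ) :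
    ∑ p ∈ s.offDiag, x p.1 * x p.2 = #s * (#s - 1) * (∏ i ∈ s, x i) ^ (2 / #s : ℝ) := by
  rcases s.eq_empty_or_nonempty with rfl | hs
  · simp
  have hr : (#s : ℝ) ≠ 0 := by exact_mod_cast hs.card_pos.ne'
  have hoff : ∑ p ∈ s.offDiag, x p.1 * x p.2 = ∑ p ∈ s.offDiag, θ ^ 2 :=
    sum_congr rfl fun p hp => by
      rw [mem_offDiag] at hp
      rw [hx _ hp.1, hx _ hp.2.1, sq]
  have hprod : (∏ i ∈ s, x i) ^ (2 / #s : ℝ) = θ ^ 2 := by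
    rw [prod_congr rfl hx, prod_const, ← Real.rpow_natCast, ← Real.rpow_mul hθ,
      mul_div_cancel₀ _ hr, Real.rpow_two]
  rw [hoff, hprod, sum_const, offDiag_card, nsmul_eq_mul, Nat.cast_sub (Nat.le_mul_self _)]
  push_cast
  ring

theorem forall_eq_of_forall_offDiag_mul_eq {M : Type*} [CommMonoidWithZero M] [IsCancelMulZero M]
    [DecidableEq ι] {s : Finset ι} (hs : 3 ≤ #s) {x : ι → M} (hx : ∀ i ∈ s, x i ≠ 0)
    (h : ∀ p ∈ s.offDiag, ∀ q ∈ s.offDiag, x p.1 * x p.2 = x q.1 * x q.2) :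
    ∀ i ∈ s, ∀ j ∈ s, x i = x j := by
  intro i hi j hj
  obtain rfl | hij := eq_or_ne i j
  · rfl
  have hcard : #({i, j} : Finset ι) < #s := card_le_two.trans_lt (by omega)
  obtain ⟨k, hk, hk'⟩ := exists_mem_notMem_of_card_lt_card hcard
  simp only [mem_insert, mem_singleton, not_or] at hk'
  exact mul_right_cancel₀ (hx k hk) <| h (i, k) (mem_offDiag.2 ⟨hi, hk, Ne.symm hk'.1⟩)
    (j, k) (mem_offDiag.2 ⟨hj, hk, Ne.symm hk'.2⟩)

theorem forall_eq_of_sum_offDiag_mul_eq [DecidableEq ι] {s : Finset ι} (hs : 3 ≤ #s)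
    {x : ι → ℝ} (hx : ∀ i ∈ s, 0 < x i)
    (h : ∑ p ∈ s.offDiag, x p.1 * x p.2 = #s * (#s - 1) * (∏ i ∈ s, x i) ^ (2 / #s : ℝ)) :
    ∀ i ∈ s, ∀ j ∈ s, x i = x j := by
  have hr : (3 : ℝ) ≤ #s := by exact_mod_cast hs
  have hN : (#s.offDiag : ℝ) = #s * (#s - 1) := by
    rw [offDiag_card, Nat.cast_sub (Nat.le_mul_self _)]
    push_cast
    ring
  have hNpos : (0 : ℝ) < #s.offDiag := by rw [hN]; nlinarith
  have hP : 0 < ∏ i ∈ s, x i := prod_pos hx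
  have hprod : ∏ p ∈ s.offDiag, x p.1 * x p.2 = (∏ i ∈ s, x i) ^ (2 * #s - 2) := by
    have := prod_offDiag_mul_mul_sq s x
    rw [show 2 * #s = (2 * #s - 2) + 2 by omega, pow_add] at this
    exact mul_right_cancel₀ (pow_ne_zero 2 hP.ne') this
  have hexp : ((2 * #s - 2 : ℕ) : ℝ) * (#s.offDiag : ℝ)⁻¹ = 2 / #s := by
    have : (#s : ℝ) - 1 ≠ 0 := by linarith
    rw [hN, Nat.cast_sub (by omega), Nat.cast_mul]
    field_simp
    ring
  have hpos : ∀ p ∈ s.offDiag, 0 < x p.1 * x p.2 := fun p hp => by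
    rw [mem_offDiag] at hp
    exact mul_pos (hx _ hp.1) (hx _ hp.2.1)
  refine forall_eq_of_forall_offDiag_mul_eq hs (fun i hi => (hx i hi).ne') ?_
  -- equality case of AM-GM for the products `x i * x j` (`i ≠ j`), all with the same weight
  refine (Real.geom_mean_eq_arith_mean_weighted_iff_of_pos s.offDiag
    (fun _ => (#s.offDiag : ℝ)⁻¹) (fun p => x p.1 * x p.2) (fun _ _ => by positivity)
    (by rw [sum_const, nsmul_eq_mul, mul_inv_cancel₀ hNpos.ne'])
    (fun p hp => (hpos p hp).le)).mp ?_
  rw [Real.finsetProd_rpow _ _ (fun p hp => (hpos p hp).le), hprod, ← mul_sum, h, ← hN,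
    ← Real.rpow_natCast, ← Real.rpow_mul hP.le, hexp, inv_mul_cancel_left₀ hNpos.ne']

end Finset

theorem sq_eq_of_pow_three_eq_mul {R : Type*} [CommRing R] [IsDomain R] {x c : R} (hx : x ≠ 0)
    (h : x ^ 3 = c * x) : x ^ 2 = c :=
  mul_right_cancel₀ hx (by linear_combination h)

section RealFamily

variable {ι : Type*} [Fintype ι] {μ : ι → ℝ}

theorem abs_eq_abs_of_sum_eq_zero_of_card_le_two [DecidableEq ι] (hμ : ∑ i, μ i = 0)
    (hcard : #{i | μ i ≠ 0} ≤ 2) {i j : ι} (hi : μ i ≠ 0) (hj : μ j ≠ 0) : |μ i| = |μ j| := by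
  obtain rfl | hij := eq_or_ne i j
  · rfl
  have hsub : ({i, j} : Finset ι) ⊆ ({i | μ i ≠ 0} : Finset ι) := by
    simp [insert_subset_iff, hi, hj]
  have hpair := eq_of_subset_of_card_le hsub (by rwa [card_pair hij])
  rw [← sum_filter_ne_zero, ← hpair, sum_pair hij, add_eq_zero_iff_eq_neg] at hμ
  rw [hμ, abs_neg]

theorem sum_abs_eq_sqrt_iff [DecidableEq ι] (hμ : ∑ i, μ i = 0) :
    ∑ i, |μ i| = √(∑ i, μ i ^ 2 + #{i | μ i ≠ 0} * (#{i | μ i ≠ 0} - 1) *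
        |∏ i with μ i ≠ 0, μ i| ^ (2 / #{i | μ i ≠ 0} : ℝ)) ↔
      ∀ i j, μ i ≠ 0 → μ j ≠ 0 → |μ i| = |μ j| := by
  set S : Finset ι := {i | μ i ≠ 0}
  have hS : ∀ i, i ∈ S ↔ μ i ≠ 0 := by simp [S]
  have habs : ∑ i, |μ i| = ∑ i ∈ S, |μ i| :=
    (sum_filter_of_ne fun i _ h => by simpa using h).symm
  have hsq : ∑ i, μ i ^ 2 = ∑ i ∈ S, |μ i| ^ 2 := by
    simp only [sq_abs]
    exact (sum_filter_of_ne fun i _ h => by simpa using h).symm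
  have hcard : (0 : ℝ) ≤ #S * (#S - 1) := by
    rcases S.eq_empty_or_nonempty with hempty | hne
    · simp [hempty]
    · have : (1 : ℝ) ≤ #S := by exact_mod_cast hne.card_pos
      nlinarith
  rw [habs, hsq, abs_prod, eq_comm, Real.sqrt_eq_iff_eq_sq (by positivity)
    (sum_nonneg fun i _ => abs_nonneg _), sq_sum_eq_sum_sq_add_sum_offDiag, add_right_inj, eq_comm]
  constructor
  · intro h i j hi hj
    by_cases h3 : 3 ≤ #S
    · exact forall_eq_of_sum_offDiag_mul_eq h3 (fun k hk => abs_pos.2 ((hS k).1 hk)) h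
        i ((hS i).2 hi) j ((hS j).2 hj)
    · exact abs_eq_abs_of_sum_eq_zero_of_card_le_two hμ (by change #S ≤ 2; omega) hi hj
  · intro h
    rcases S.eq_empty_or_nonempty with hempty | ⟨j, hj⟩
    · simp [hempty]
    · exact sum_offDiag_mul_of_forall_eq (abs_nonneg _)
        fun i hi => h i j ((hS i).1 hi) ((hS j).1 hj)

theorem forall_abs_eq_iff_exists_pow_three_eq :
    (∀ i j, μ i ≠ 0 → μ j ≠ 0 → |μ i| = |μ j|) ↔ ∃ c : ℝ, ∀ i, μ i ^ 3 = c * μ i := by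
  constructor
  · intro h
    by_cases h0 : ∃ j, μ j ≠ 0
    · obtain ⟨j, hj⟩ := h0
      refine ⟨μ j ^ 2, fun i => ?_⟩
      by_cases hi : μ i = 0
      · simp [hi]
      · rw [← sq_abs (μ j), ← h i j hi hj, sq_abs]
        ring
    · simp only [not_exists, not_not] at h0
      exact ⟨0, fun i => by simp [h0 i]⟩
  · rintro ⟨c, hc⟩ i j hi hj
    exact sq_eq_sq_iff_abs_eq_abs _ _ |>.1
      ((sq_eq_of_pow_three_eq_mul hi (hc i)).trans (sq_eq_of_pow_three_eq_mul hj (hc j)).symm)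

theorem card_filter_ne_zero_mul_eq_sum_sq {c : ℝ} (h : ∀ i, μ i ^ 3 = c * μ i) :
    #{i | μ i ≠ 0} * c = ∑ i, μ i ^ 2 := by
  have hsq : ∀ i ∈ ({i | μ i ≠ 0} : Finset ι), μ i ^ 2 = c := fun i hi =>
    sq_eq_of_pow_three_eq_mul (mem_filter.1 hi).2 (h i)
  rw [← sum_filter_of_ne fun i _ h => by simpa using h, sum_congr rfl hsq, sum_const,
    nsmul_eq_mul]

end RealFamily

namespace SimpleGraph

variable {V : Type*} {G : SimpleGraph V}

theorem Walk.adj_of_odd_length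
    (h3 : ∀ ⦃u x y v⦄, G.Adj u x → G.Adj x y → G.Adj y v → G.Adj u v) :
    ∀ {u v : V} (w : G.Walk u v), Odd w.length → G.Adj u v
  | _, _, .nil, hw => by simp at hw
  | _, _, .cons h .nil, _ => h
  | _, _, .cons h (.cons h' w), hw =>
    h3 h h' (adj_of_odd_length h3 w (by simpa [parity_simps] using hw))

theorem Connected.exists_adj_iff_ne (hG : G.Connected)
    (h3 : ∀ ⦃u x y v⦄, G.Adj u x → G.Adj x y → G.Adj y v → G.Adj u v) :
    ∃ s : V → Bool, ∀ u v, G.Adj u v ↔ s u ≠ s v := by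
  obtain ⟨u₀⟩ := hG.nonempty
  let w : ∀ v, G.Walk u₀ v := fun v => (hG.preconnected u₀ v).some
  refine ⟨fun v => decide (Even (w v).length), fun u v => ⟨fun huv hs => ?_, fun hs => ?_⟩⟩
  · -- an edge between two vertices of the same parity closes an odd walk at `u₀`
    have hodd : Odd ((w u).append (.cons huv (w v).reverse)).length := by
      simp only [decide_eq_decide] at hs
      simp [← Nat.not_even_iff_odd, parity_simps, hs]
    exact G.loopless.irrefl _ (Walk.adj_of_odd_length h3 _ hodd)
  · refine Walk.adj_of_odd_length h3 ((w u).reverse.append (w v)) ?_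
    simp only [ne_eq, decide_eq_decide] at hs
    simp [← Nat.not_even_iff_odd, parity_simps]
    tauto

theorem Iso.adj_iff_isLeft_ne {α β : Type*} (e : G ≃g completeBipartiteGraph α β) (u v : V) :
    G.Adj u v ↔ (e u).isLeft ≠ (e v).isLeft := by
  rw [← e.map_adj_iff]
  rcases e u with _ | _ <;> rcases e v with _ | _ <;> simp

theorem trace_adjMatrix_sq [Fintype V] [DecidableEq V] [DecidableRel G.Adj] {α : Type*}
    [Semiring α] :
    (G.adjMatrix α ^ 2).trace = 2 * #G.edgeFinset := by
  simp only [sq, trace, diag_apply, adjMatrix_mul_self_apply_self]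
  rw [← Nat.cast_sum, sum_degrees_eq_twice_card_edges]
  push_cast
  rfl

theorem adj_of_adjMatrix_pow_three_eq_smul [Fintype V] [DecidableEq V] [DecidableRel G.Adj]
    {α : Type*} [Semiring α] [CharZero α] {c : α} (h : G.adjMatrix α ^ 3 = c • G.adjMatrix α)
    ⦃u x y v : V⦄ (hux : G.Adj u x) (hxy : G.Adj x y) (hyv : G.Adj y v) : G.Adj u v := by
  by_contra huv
  have hwalk : Fintype.card {p : G.Walk u v | p.length = 3} ≠ 0 :=
    (Fintype.card_pos_iff.2 ⟨⟨.cons hux (.cons hxy (.cons hyv .nil)), rfl⟩⟩).ne'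
  have hcount := G.adjMatrix_pow_apply_eq_card_walk (α := α) 3 u v
  rw [h, Matrix.smul_apply, adjMatrix_apply, if_neg huv, smul_zero] at hcount
  exact hwalk (by exact_mod_cast hcount.symm)

section Bipartition

variable {s : V → Bool}

theorem card_filter_pos_of_adj_iff_ne [Fintype V] (hs : ∀ u v, G.Adj u v ↔ s u ≠ s v)
    {u v : V} (huv : G.Adj u v) (b : Bool) : 0 < #{w | s w = b} := by
  have hne := (hs u v).1 huv
  obtain hb | hb : s u = b ∨ s v = b := by
    cases b <;> cases hu : s u <;> cases hv : s v <;> simp_all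
  exacts [card_pos.2 ⟨u, by simpa⟩, card_pos.2 ⟨v, by simpa⟩]

theorem exists_iso_completeBipartiteGraph_of_adj_iff_ne [Fintype V]
    (hs : ∀ u v, G.Adj u v ↔ s u ≠ s v) {u v : V} (huv : G.Adj u v) :
    ∃ a b : ℕ, 1 ≤ a ∧ 1 ≤ b ∧ a + b = Fintype.card V ∧
      Nonempty (G ≃g completeBipartiteGraph (Fin a) (Fin b)) := by
  let e : G ≃g completeBipartiteGraph {w // s w = true} {w // ¬s w = true} :=
    ⟨(Equiv.sumCompl fun w => s w = true).symm, fun {x y} => by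
      rw [hs]
      by_cases hx : s x = true <;> by_cases hy : s y = true <;>
        simp [Equiv.sumCompl_symm_apply_of_pos, Equiv.sumCompl_symm_apply_of_neg, hx, hy]⟩
  refine ⟨_, _, ?_, ?_, ?_,
    ⟨e.trans (completeBipartiteGraphCongr (Fintype.equivFin _) (Fintype.equivFin _))⟩⟩
  · simpa [Fintype.card_subtype] using card_filter_pos_of_adj_iff_ne hs huv true
  · simpa [Fintype.card_subtype] using card_filter_pos_of_adj_iff_ne hs huv false
  · rw [← Fintype.card_sum, Fintype.card_congr (Equiv.sumCompl _)]

theorem adjMatrix_eq_submatrix_of_adj_iff_ne [DecidableRel G.Adj]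
    (hs : ∀ u v, G.Adj u v ↔ s u ≠ s v) :
    G.adjMatrix ℝ = ((⊤ : SimpleGraph Bool).adjMatrix ℝ).submatrix s s := by
  ext u v
  simp [adjMatrix_apply, hs]

variable [Fintype V] [DecidableEq V] [DecidableRel G.Adj]

theorem adjMatrix_pow_three_eq_of_adj_iff_ne (hs : ∀ u v, G.Adj u v ↔ s u ≠ s v) :
    G.adjMatrix ℝ ^ 3 =
      ((#{v | s v = true} * #{v | s v = false} : ℕ) : ℝ) • G.adjMatrix ℝ := by
  rw [pow_succ, sq, adjMatrix_eq_submatrix_of_adj_iff_ne hs, submatrix_mul_submatrix_self,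
    submatrix_mul_submatrix_self]
  set J := (⊤ : SimpleGraph Bool).adjMatrix ℝ
  set D := diagonal fun c => (#{v | s v = c} : ℝ)
  -- `J` swaps the two parts, so `J * D * J * D` is the scalar matrix `a * b`
  have hcube : J * D * J * D * J = ((#{v | s v = true} * #{v | s v = false} : ℕ) : ℝ) • J := by
    ext c d
    cases c <;> cases d <;> simp [J, D, mul_apply, mul_comm]
  rw [hcube]
  rfl

theorem trace_adjMatrix_sq_of_adj_iff_ne (hs : ∀ u v, G.Adj u v ↔ s u ≠ s v) :
    (G.adjMatrix ℝ ^ 2).trace = 2 * ((#{v | s v = true} * #{v | s v = false} : ℕ) : ℝ) := by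
  rw [sq, adjMatrix_eq_submatrix_of_adj_iff_ne hs, submatrix_mul_submatrix_self,
    trace_submatrix_self]
  simp [mul_apply]
  ring

end Bipartition

theorem Connected.exists_adjMatrix_pow_three_eq_smul_iff [Fintype V] [DecidableEq V]
    [DecidableRel G.Adj] [Nontrivial V] (hG : G.Connected) :
    (∃ c : ℝ, G.adjMatrix ℝ ^ 3 = c • G.adjMatrix ℝ) ↔
      ∃ a b : ℕ, 1 ≤ a ∧ 1 ≤ b ∧ a + b = Fintype.card V ∧
        Nonempty (G ≃g completeBipartiteGraph (Fin a) (Fin b)) := by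
  constructor
  · rintro ⟨c, hc⟩
    obtain ⟨s, hs⟩ := hG.exists_adj_iff_ne (adj_of_adjMatrix_pow_three_eq_smul hc)
    obtain ⟨v, hv⟩ := hG.preconnected.exists_adj_of_nontrivial (Classical.arbitrary V)
    exact exists_iso_completeBipartiteGraph_of_adj_iff_ne hs hv
  · rintro ⟨a, b, -, -, -, ⟨e⟩⟩
    exact ⟨_, adjMatrix_pow_three_eq_of_adj_iff_ne e.adj_iff_isLeft_ne⟩

theorem energy_eq_sqrt_iff {n : ℕ} (G : SimpleGraph (Fin n)) [DecidableRel G.Adj] :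
    G.energy = √(2 * #G.edgeFinset + ((n : ℝ) - G.nullity) * ((n : ℝ) - G.nullity - 1) *
        |G.prodNonzeroEig| ^ ((2 : ℝ) / ((n : ℝ) - G.nullity))) ↔
      ∃ c : ℝ, G.adjMatrix ℝ ^ 3 = c • G.adjMatrix ℝ := by
  have hrank : (n : ℝ) - G.nullity = #{i | G.adjMatrix_isHermitian.eigenvalues i ≠ 0} := by
    have := card_filter_add_card_filter_not (s := univ)
      fun i => G.adjMatrix_isHermitian.eigenvalues i = 0
    rw [card_univ, Fintype.card_fin] at this
    simp only [nullity, ne_eq, ← this, Nat.cast_add, add_sub_cancel_left]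
  have hsum : ∑ i, G.adjMatrix_isHermitian.eigenvalues i = 0 := by
    simpa [trace_adjMatrix] using (G.adjMatrix_isHermitian.trace_pow 1).symm
  have hsq : 2 * (#G.edgeFinset : ℝ) = ∑ i, G.adjMatrix_isHermitian.eigenvalues i ^ 2 := by
    rw [← trace_adjMatrix_sq, G.adjMatrix_isHermitian.trace_pow]
    rfl
  rw [hrank, hsq]
  exact (sum_abs_eq_sqrt_iff hsum).trans <| forall_abs_eq_iff_exists_pow_three_eq.trans <|
    exists_congr fun c => (G.adjMatrix_isHermitian.pow_three_eq_smul_iff c).symm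

theorem nullity_eq_of_adj_iff_ne {n : ℕ} {G : SimpleGraph (Fin n)} [DecidableRel G.Adj]
    {s : Fin n → Bool} (hs : ∀ u v, G.Adj u v ↔ s u ≠ s v) {u v : Fin n} (huv : G.Adj u v) :
    G.nullity = n - 2 := by
  set μ := G.adjMatrix_isHermitian.eigenvalues
  set c : ℝ := ((#{v | s v = true} * #{v | s v = false} : ℕ) : ℝ)
  have hc : c ≠ 0 := by
    have := card_filter_pos_of_adj_iff_ne hs huv true
    have := card_filter_pos_of_adj_iff_ne hs huv false
    positivity
  have hcube : ∀ i, μ i ^ 3 = c * μ i :=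
    (G.adjMatrix_isHermitian.pow_three_eq_smul_iff c).1 (adjMatrix_pow_three_eq_of_adj_iff_ne hs)
  have hsq : ∑ i, μ i ^ 2 = 2 * c := by
    rw [← trace_adjMatrix_sq_of_adj_iff_ne hs, G.adjMatrix_isHermitian.trace_pow]
    rfl
  have hrank : #{i | μ i ≠ 0} = 2 := by
    have := card_filter_ne_zero_mul_eq_sum_sq hcube
    rw [hsq] at this
    exact_mod_cast mul_right_cancel₀ hc this
  have := card_filter_add_card_filter_not (s := univ) fun i => μ i = 0
  rw [card_univ, Fintype.card_fin] at this
  simp only [ne_eq] at hrank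
  change #{i | μ i = 0} = n - 2
  omega

end SimpleGraph

theorem graph_energy_eq_mcclelland_bound_iff_completeBipartite {n : ℕ}
    (G : SimpleGraph (Fin n)) [DecidableRel G.Adj] (hconn : G.Connected)
    (hn : 2 ≤ n) (m : ℕ) (hm : m = G.edgeFinset.card)
    (κ : ℕ) (hκ : κ = G.nullity) :
    (G.energy =
        Real.sqrt (2 * m +
          ((n : ℝ) - κ) * ((n : ℝ) - κ - 1) *
            |G.prodNonzeroEig| ^ ((2 : ℝ) / ((n : ℝ) - κ))) ↔
      ∃ a b : ℕ, 1 ≤ a ∧ 1 ≤ b ∧ a + b = n ∧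
        Nonempty (G ≃g completeBipartiteGraph (Fin a) (Fin b))) ∧
    (G.energy =
        Real.sqrt (2 * m +
          ((n : ℝ) - κ) * ((n : ℝ) - κ - 1) *
            |G.prodNonzeroEig| ^ ((2 : ℝ) / ((n : ℝ) - κ))) →
      κ = n - 2) := by
  subst hm hκ
  have : Nontrivial (Fin n) := Fin.nontrivial_iff_two_le.2 hn
  have hbip := hconn.exists_adjMatrix_pow_three_eq_smul_iff
  rw [Fintype.card_fin] at hbip
  refine ⟨G.energy_eq_sqrt_iff.trans hbip, fun h => ?_⟩
  obtain ⟨a, b, -, -, -, ⟨e⟩⟩ := hbip.1 (G.energy_eq_sqrt_iff.1 h)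
  obtain ⟨v, hv⟩ := hconn.preconnected.exists_adj_of_nontrivial ⟨0, by omega⟩
  exact SimpleGraph.nullity_eq_of_adj_iff_ne e.adj_iff_isLeft_ne hv
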